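/- Let K be a field with n commuting iterative higher derivations D_1, …, D_n, let m, q ∈ ℕ, and let B be a K-algebra. Write K_m = K[t_1, …, t_n]/(t_1, …, t_n)^{m+1} and K_q = K[u_1, …, u_n]/(u_1, …, u_n)^{q+1}. Regard B ⊗_K K_q as a K-algebra via the twisted structure map c ↦ Σ_{|γ|≤q} D_γ(c)·(1 ⊗ u^γ), and form the tensor product (B ⊗_K K_q)~ ⊗_K K_m over K using this structure. Regard (B ⊗_K K_m) ⊗_K K_q (with the ordinary tensor product K-algebra structures) as a K-algebra via the twisted structure map c ↦ Σ_{|γ|≤q} D_γ(c)·(1 ⊗ 1 ⊗ u^γ). Then the map θ determined by θ(b ⊗ u^β ⊗ t^α) = b ⊗ t^α ⊗ u^β is an isomorphism of K-algebras ((B ⊗_K K_q)~ ⊗_K K_m) ≅ ((B ⊗_K K_m) ⊗_K K_q)~. -/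

import Mathlib

open Finset MvPolynomial
open scoped TensorProduct

/-- The mixed derivative `D_γ = D_{1,γ_1} ∘ ⋯ ∘ D_{n,γ_n}`. -/
def Dcomp {K : Type*} {n : ℕ} (D : Fin n → ℕ → K → K) (γ : Fin n → ℕ) : K → K :=
  (List.finRange n).foldr (fun i g => D i (γ i) ∘ g) id

/-- The multi-indices `γ ∈ ℕ^n` of size `|γ| ≤ q`. -/
def mIdx (n q : ℕ) : Finset (Fin n → ℕ) :=
  (Fintype.piFinset fun _ => Finset.range (q + 1)).filter fun γ => ∑ i, γ i ≤ q

/-- The truncated polynomial ring `K_m = K[t_1, …, t_n]/(t_1, …, t_n)^{m+1}`. -/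
noncomputable def MvTruncP (K : Type*) [CommRing K] (n m : ℕ) : Type _ :=
  MvPolynomial (Fin n) K ⧸
    (Ideal.span (Set.range (X : Fin n → MvPolynomial (Fin n) K))) ^ (m + 1)

noncomputable instance (K : Type*) [CommRing K] (n m : ℕ) : CommRing (MvTruncP K n m) :=
  Ideal.Quotient.commRing _

noncomputable instance (K : Type*) [CommRing K] (n m : ℕ) : Algebra K (MvTruncP K n m) :=
  Ideal.Quotient.algebra K

/-- The class of the monomial `t^γ = t_1^{γ_1}⋯t_n^{γ_n}` in `K_m`. -/
noncomputable def tpow (K : Type*) [CommRing K] (n m : ℕ) (γ : Fin n → ℕ) :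
    MvTruncP K n m :=
  Ideal.Quotient.mk _ (∏ i, X i ^ γ i)

/-- Type synonym: the ring `C` regarded as a `K`-algebra via the ring homomorphism `e`
(the "twisted" `K`-algebra structure). -/
def TwistedT (K : Type*) [CommRing K] {C : Type*} [CommRing C] (e : K →+* C) : Type _ := C

noncomputable instance (K : Type*) [CommRing K] {C : Type*} [CommRing C] (e : K →+* C) :
    CommRing (TwistedT K e) := ‹CommRing C›

noncomputable instance (K : Type*) [CommRing K] {C : Type*} [CommRing C] (e : K →+* C) :
    Algebra K (TwistedT K e) := e.toAlgebra

/-- The identity map of `C`, viewed as a map into the twist `TwistedT K e`. -/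
def twmk {K C : Type*} [CommRing K] [CommRing C] (e : K →+* C) (x : C) : TwistedT K e := x

section TruncBasis

variable (K : Type*) [Field K] (n : ℕ)

/-- Polynomials all of whose monomials have total degree at least `k`. -/
noncomputable def hiIdeal (k : ℕ) : Ideal (MvPolynomial (Fin n) K) where
  carrier := {p | ∀ d ∈ p.support, k ≤ ∑ i, d i}
  add_mem' := by
    classical
    intro p q hp hq d hd
    rcases Finset.mem_union.1 (MvPolynomial.support_add hd) with h | h
    · exact hp d h
    · exact hq d h
  zero_mem' := by simp
  smul_mem' := by
    classical
    intro c p hp d hd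
    rw [smul_eq_mul] at hd
    obtain ⟨a, ha, b, hb, rfl⟩ := Finset.mem_add.1 (MvPolynomial.support_mul c p hd)
    have := hp b hb
    have : (∑ i, b i) ≤ ∑ i, (a + b) i := by
      simp only [Finsupp.add_apply]
      rw [Finset.sum_add_distrib]; omega
    omega

variable {K n}

theorem X_mem_hiIdeal_one :
    Ideal.span (Set.range (X : Fin n → MvPolynomial (Fin n) K)) ≤ hiIdeal K n 1 := by
  rw [Ideal.span_le]
  rintro _ ⟨i, rfl⟩ d hd
  rw [MvPolynomial.support_X] at hd
  simp only [Finset.mem_singleton] at hd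
  subst hd
  rw [Finset.sum_eq_single i]
  · simp
  · intro j _ hj; simp [Finsupp.single_apply, Ne.symm hj]
  · simp

theorem pow_le_hiIdeal (k : ℕ) :
    (Ideal.span (Set.range (X : Fin n → MvPolynomial (Fin n) K))) ^ k ≤ hiIdeal K n k := by
  induction k with
  | zero => intro p _ d _; exact Nat.zero_le _
  | succ k ih =>
      rw [pow_succ]
      refine Ideal.mul_le.2 fun r hr s hs => ?_
      intro d hd
      obtain ⟨a, ha, b, hb, rfl⟩ := Finset.mem_add.1 (MvPolynomial.support_mul r s hd)
      have h1 := ih hr a ha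
      have h2 := X_mem_hiIdeal_one hs b hb
      simp only [Finsupp.add_apply]
      rw [Finset.sum_add_distrib]; omega

theorem prod_X_pow_mem (s : Finset (Fin n)) (f : Fin n → ℕ) :
    (∏ i ∈ s, (X i : MvPolynomial (Fin n) K) ^ f i) ∈
      (Ideal.span (Set.range (X : Fin n → MvPolynomial (Fin n) K))) ^ (∑ i ∈ s, f i) := by
  classical
  induction s using Finset.induction with
  | empty => simp [Ideal.one_eq_top]
  | insert a s hx ih =>
      rw [Finset.prod_insert hx, Finset.sum_insert hx, pow_add]
      have hXa : (X a : MvPolynomial (Fin n) K) ∈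
          Ideal.span (Set.range (X : Fin n → MvPolynomial (Fin n) K)) :=
        Ideal.subset_span (Set.mem_range_self a)
      exact Submodule.mul_mem_mul (Ideal.pow_mem_pow hXa _) ih

/-- `∏ i, X i ^ α i = monomial α 1` over a fintype. -/
theorem prod_univ_X_pow (d : Fin n →₀ ℕ) :
    (∏ i, (X i : MvPolynomial (Fin n) K) ^ d i) = monomial d 1 := by
  classical
  rw [← MvPolynomial.prod_X_pow_eq_monomial]
  exact (Finset.prod_subset (Finset.subset_univ _) (by
    intro i _ hi
    simp [Finsupp.notMem_support_iff.1 hi])).symm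

theorem monomial_mem_trunc {m : ℕ} (d : Fin n →₀ ℕ) (c : K) (h : m + 1 ≤ ∑ i, d i) :
    monomial d c ∈
      (Ideal.span (Set.range (X : Fin n → MvPolynomial (Fin n) K))) ^ (m + 1) := by
  have h1 : monomial d (1 : K) ∈
      (Ideal.span (Set.range (X : Fin n → MvPolynomial (Fin n) K))) ^ (m + 1) := by
    rw [← prod_univ_X_pow]
    exact Ideal.pow_le_pow_right h (by simpa using prod_X_pow_mem Finset.univ fun i => d i)
  have : monomial d c = C c * monomial d (1 : K) := by
    rw [MvPolynomial.C_mul_monomial, mul_one]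
  rw [this]
  exact Ideal.mul_mem_left _ _ h1

/-- The monomial family in the truncated polynomial ring. -/
noncomputable def tfam {K : Type*} [Field K] {n : ℕ} (m : ℕ)
    (d : {d : Fin n →₀ ℕ // (∑ i, d i) ≤ m}) :
    MvTruncP K n m :=
  Ideal.Quotient.mk _ (monomial d.1 (1 : K))

theorem tfam_def {m : ℕ} (d : {d : Fin n →₀ ℕ // (∑ i, d i) ≤ m}) :
    (tfam m : _ → MvTruncP K n m) d = Ideal.Quotient.mkₐ K _ (monomial d.1 (1 : K)) := rfl

theorem mk_eq_zero_trunc {m : ℕ} (d : Fin n →₀ ℕ) (c : K) (h : m + 1 ≤ ∑ i, d i) :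
    (Ideal.Quotient.mk ((Ideal.span (Set.range (X : Fin n → MvPolynomial (Fin n) K))) ^ (m + 1))
      (monomial d c) : MvTruncP K n m) = 0 :=
  Ideal.Quotient.eq_zero_iff_mem.2 (monomial_mem_trunc d c h)

theorem tfam_li (m : ℕ) : LinearIndependent K ((tfam m : _ → MvTruncP K n m)) := by
  classical
  rw [LinearIndependent, injective_iff_map_eq_zero]
  intro l hl
  have : (Ideal.Quotient.mkₐ K
      ((Ideal.span (Set.range (X : Fin n → MvPolynomial (Fin n) K))) ^ (m + 1)))
      (∑ d ∈ l.support, monomial d.1 (l d)) = 0 := by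
    rw [map_sum]; refine Eq.trans ?_ hl; rw [Finsupp.linearCombination_apply, Finsupp.sum]
    refine Finset.sum_congr rfl fun d _ => ?_
    rw [tfam_def, show (monomial d.1 (l d) : MvPolynomial (Fin n) K)
        = l d • monomial d.1 1 by rw [MvPolynomial.smul_monomial, smul_eq_mul, mul_one],
      map_smul]
    rfl
  rw [Ideal.Quotient.mkₐ_eq_mk, Ideal.Quotient.eq_zero_iff_mem] at this
  have hsupp := pow_le_hiIdeal (m + 1) this
  ext d'
  by_contra hne
  have hco : MvPolynomial.coeff d'.1 (∑ d ∈ l.support, monomial d.1 (l d)) = l d' := by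
    rw [MvPolynomial.coeff_sum]
    rw [Finset.sum_eq_single d']
    · simp [MvPolynomial.coeff_monomial]
    · intro d _ hd
      have : d.1 ≠ d'.1 := fun h => hd (Subtype.ext h)
      simp [MvPolynomial.coeff_monomial, this]
    · intro h
      simp [Finsupp.notMem_support_iff.1 h]
  have hmem : d'.1 ∈ (∑ d ∈ l.support, monomial d.1 (l d)).support := by
    rw [MvPolynomial.mem_support_iff, hco]
    exact hne
  have := hsupp d'.1 hmem
  have := d'.2
  omega

theorem tfam_span (m : ℕ) :
    ⊤ ≤ Submodule.span K (Set.range ((tfam m : _ → MvTruncP K n m))) := by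
  classical
  intro x _
  obtain ⟨p, rfl⟩ := Ideal.Quotient.mk_surjective x
  rw [show (Ideal.Quotient.mk _ p : MvTruncP K n m) = Ideal.Quotient.mkₐ K _ p from rfl]
  rw [← MvPolynomial.support_sum_monomial_coeff p, map_sum]
  refine Submodule.sum_mem _ fun d hd => ?_
  rcases le_or_gt (∑ i, d i) m with h | h
  · have : (Ideal.Quotient.mkₐ K _ (monomial d (MvPolynomial.coeff d p)) : MvTruncP K n m)
        = (MvPolynomial.coeff d p) • (tfam m : _ → MvTruncP K n m) ⟨d, h⟩ := by
      rw [tfam_def, show (monomial d (MvPolynomial.coeff d p) : MvPolynomial (Fin n) K)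
          = MvPolynomial.coeff d p • monomial d 1 by
            rw [MvPolynomial.smul_monomial, smul_eq_mul, mul_one],
        map_smul]
      rfl
    rw [this]
    exact Submodule.smul_mem _ _ (Submodule.subset_span ⟨⟨d, h⟩, rfl⟩)
  · rw [Ideal.Quotient.mkₐ_eq_mk, mk_eq_zero_trunc d _ h]
    exact Submodule.zero_mem _

/-- The monomial basis of the truncated polynomial ring. -/
noncomputable def tbasis (K : Type*) [Field K] (n m : ℕ) :
    Module.Basis {d : Fin n →₀ ℕ // (∑ i, d i) ≤ m} K (MvTruncP K n m) :=
  Module.Basis.mk (tfam_li m) (tfam_span m)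

theorem tbasis_apply {K : Type*} [Field K] {n : ℕ} (m : ℕ)
    (d : {d : Fin n →₀ ℕ // (∑ i, d i) ≤ m}) :
    tbasis K n m d = tfam m d := by
  rw [tbasis, Module.Basis.coe_mk]

theorem tpow_eq_mk {K : Type*} [Field K] {n : ℕ} (m : ℕ) (α : Fin n → ℕ) :
    tpow K n m α = Ideal.Quotient.mk _ (monomial (Finsupp.equivFunOnFinite.symm α) (1 : K)) := by
  rw [tpow, ← prod_univ_X_pow]
  rfl

theorem sum_equivFun {n : ℕ} (α : Fin n → ℕ) :
    (∑ i, (Finsupp.equivFunOnFinite.symm α) i) = ∑ i, α i := rfl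

theorem tpow_eq_tbasis {K : Type*} [Field K] {n : ℕ} {m : ℕ} {α : Fin n → ℕ}
    (h : (∑ i, α i) ≤ m) :
    tpow K n m α = tbasis K n m ⟨Finsupp.equivFunOnFinite.symm α, by rw [sum_equivFun]; exact h⟩ := by
  rw [tpow_eq_mk, tbasis_apply]; rfl

theorem tpow_eq_zero {K : Type*} [Field K] {n : ℕ} {m : ℕ} {α : Fin n → ℕ}
    (h : m < ∑ i, α i) : tpow K n m α = 0 := by
  rw [tpow_eq_mk]
  exact mk_eq_zero_trunc _ _ (by rw [sum_equivFun]; omega)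

theorem tbasis_eq_tpow {K : Type*} [Field K] {n : ℕ} {m : ℕ}
    (d : {d : Fin n →₀ ℕ // (∑ i, d i) ≤ m}) :
    tbasis K n m d = tpow K n m d.1 := by
  rw [tbasis_apply, tpow_eq_mk, tfam]
  congr 1
  simp

theorem span_tpow (K : Type*) [Field K] (n m : ℕ) :
    Submodule.span K (Set.range (tpow K n m)) = ⊤ := by
  refine top_unique (le_trans (tfam_span m) (Submodule.span_mono ?_))
  rintro _ ⟨d, rfl⟩
  exact ⟨fun i => d.1 i, by rw [← tbasis_apply, tbasis_eq_tpow]⟩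

theorem twmk_eq {K C : Type*} [CommRing K] [CommRing C] (e : K →+* C) (x : C) :
    twmk e x = x := rfl

end TruncBasis

set_option maxHeartbeats 2000000 in
/-- for a field `K` with `n` commuting iterative higher derivations
`D_1, …, D_n`, a `K`-algebra `B`, and `m, q ∈ ℕ`, the map
`θ(b ⊗ u^β ⊗ t^α) = b ⊗ t^α ⊗ u^β` is a `K`-algebra isomorphism
`((B ⊗_K K_q)~ ⊗_K K_m) ≅ ((B ⊗_K K_m) ⊗_K K_q)~`, where `~` denotes the twisted
`K`-algebra structure: on `B ⊗_K K_q` via `e1 : c ↦ ∑_{|γ|≤q} D_γ(c)·(1 ⊗ u^γ)`, and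
on `(B ⊗_K K_m) ⊗_K K_q` via `e2 : c ↦ ∑_{|γ|≤q} D_γ(c)·(1 ⊗ 1 ⊗ u^γ)`. -/
theorem stmt_19 {K B : Type*} [Field K] [CommRing B] [Algebra K B] {n : ℕ}
    (D : Fin n → ℕ → K → K)
    (hD0 : ∀ i, D i 0 = id)
    (hadd : ∀ i k (a b : K), D i k (a + b) = D i k a + D i k b)
    (hleib : ∀ i k (a b : K),
      D i k (a * b) = ∑ s ∈ Finset.range (k + 1), D i s a * D i (k - s) b)
    (hiter : ∀ i k l (a : K), D i k (D i l a) = (k + l).choose l • D i (k + l) a)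
    (hcomm : ∀ i j k l (a : K), D i k (D j l a) = D j l (D i k a))
    (m q : ℕ)
    (e1 : K →+* (B ⊗[K] MvTruncP K n q))
    (he1 : ∀ c : K, e1 c = ∑ γ ∈ mIdx n q,
      algebraMap K B (Dcomp D γ c) ⊗ₜ[K] tpow K n q γ)
    (e2 : K →+* ((B ⊗[K] MvTruncP K n m) ⊗[K] MvTruncP K n q))
    (he2 : ∀ c : K, e2 c = ∑ γ ∈ mIdx n q,
      (algebraMap K B (Dcomp D γ c) ⊗ₜ[K] (1 : MvTruncP K n m)) ⊗ₜ[K] tpow K n q γ) :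
    ∃ θ : ((TwistedT K e1) ⊗[K] MvTruncP K n m) ≃ₐ[K] (TwistedT K e2),
      ∀ (b : B) (α β : Fin n → ℕ), (∑ i, α i) ≤ m → (∑ i, β i) ≤ q →
        θ ((twmk e1 (b ⊗ₜ[K] tpow K n q β)) ⊗ₜ[K] tpow K n m α)
          = twmk e2 ((b ⊗ₜ[K] tpow K n m α) ⊗ₜ[K] tpow K n q β) := by
  classical
  -- the inclusion `B ⊗ K_q → (B ⊗ K_m) ⊗ K_q`
  let r : (B ⊗[K] MvTruncP K n q) →ₐ[K] ((B ⊗[K] MvTruncP K n m) ⊗[K] MvTruncP K n q) :=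
    Algebra.TensorProduct.map Algebra.TensorProduct.includeLeft (AlgHom.id K _)
  have hr : ∀ c : K, r (e1 c) = e2 c := by
    intro c
    rw [he1, he2, map_sum]
    refine Finset.sum_congr rfl fun γ _ => ?_
    simp only [r, Algebra.TensorProduct.map_tmul, Algebra.TensorProduct.includeLeft_apply,
      AlgHom.coe_id, id_eq]
  let f : TwistedT K e1 →ₐ[K] TwistedT K e2 :=
    { toRingHom := (r.toRingHom : TwistedT K e1 →+* TwistedT K e2), commutes' := hr }
  have hf : ∀ x : B ⊗[K] MvTruncP K n q, f (twmk e1 x) = twmk e2 (r x) := fun _ => rfl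
  -- the inclusion `K_m → (B ⊗ K_m) ⊗ K_q`
  let inc2 : MvTruncP K n m →ₐ[K] ((B ⊗[K] MvTruncP K n m) ⊗[K] MvTruncP K n q) :=
    Algebra.TensorProduct.includeLeft.comp Algebra.TensorProduct.includeRight
  let gpre : MvPolynomial (Fin n) K →+* TwistedT K e2 :=
    (eval₂Hom e2 fun i => inc2 (Ideal.Quotient.mk _ (X i)))
  have hvalprod : ∀ d : Fin n →₀ ℕ,
      inc2 (Ideal.Quotient.mk _ (monomial d (1 : K)))
        = d.prod fun i k => (inc2 (Ideal.Quotient.mk _ (X i))) ^ k := by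
    intro d
    rw [show (monomial d (1 : K) : MvPolynomial (Fin n) K) = d.prod fun i k => X i ^ k by
      rw [MvPolynomial.monomial_eq, C_1, one_mul]]
    rw [map_finsuppProd]
    exact (map_finsuppProd inc2 _ _).trans (Finsupp.prod_congr fun i _ =>
      (congrArg inc2 (map_pow (Ideal.Quotient.mk _) (X i) (d i))).trans (map_pow inc2 _ _))
  have hkill : ∀ p ∈ (Ideal.span (Set.range (X : Fin n → MvPolynomial (Fin n) K))) ^ (m + 1),
      gpre p = 0 := by
    intro p hp
    have hsup := pow_le_hiIdeal (m + 1) hp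
    rw [← MvPolynomial.support_sum_monomial_coeff p, map_sum]
    refine Finset.sum_eq_zero fun d hd => ?_
    have : gpre (monomial d (MvPolynomial.coeff d p))
        = e2 (MvPolynomial.coeff d p) * d.prod fun i k =>
            (inc2 (Ideal.Quotient.mk _ (X i))) ^ k := by
      simp only [gpre, coe_eval₂Hom, MvPolynomial.eval₂_monomial]
      exact MvPolynomial.eval₂Hom_monomial _ _ _ _
    rw [this, ← hvalprod d, mk_eq_zero_trunc d 1 (hsup d hd)]
    exact mul_eq_zero_of_right _ (map_zero inc2)
  let gq : MvTruncP K n m →+* TwistedT K e2 := Ideal.Quotient.lift _ gpre hkill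
  have hgc : ∀ c : K, gq (algebraMap K (MvTruncP K n m) c) = e2 c := by
    intro c
    have h1 : (algebraMap K (MvTruncP K n m)) c
        = Ideal.Quotient.mk ((Ideal.span (Set.range
            (X : Fin n → MvPolynomial (Fin n) K))) ^ (m + 1)) (MvPolynomial.C c) := rfl
    rw [h1]
    show Ideal.Quotient.lift _ gpre hkill _ = e2 c
    rw [Ideal.Quotient.lift_mk]
    simp only [gpre, coe_eval₂Hom, MvPolynomial.eval₂_C]
    exact MvPolynomial.eval₂Hom_C _ _ _
  let g : MvTruncP K n m →ₐ[K] TwistedT K e2 := { toRingHom := gq, commutes' := hgc }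
  have hg_tpow : ∀ α : Fin n → ℕ,
      gq (tpow K n m α) = twmk e2 (((1 : B) ⊗ₜ[K] tpow K n m α) ⊗ₜ[K] (1 : MvTruncP K n q)) := by
    intro α
    rw [tpow_eq_mk]
    have h2 : gq (Ideal.Quotient.mk _ (monomial (Finsupp.equivFunOnFinite.symm α) (1 : K)))
        = gpre (monomial (Finsupp.equivFunOnFinite.symm α) (1 : K)) :=
      Ideal.Quotient.lift_mk _ _ _
    rw [h2]
    have : gpre (monomial (Finsupp.equivFunOnFinite.symm α) (1 : K))
        = e2 1 * (Finsupp.equivFunOnFinite.symm α).prod fun i k =>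
            (inc2 (Ideal.Quotient.mk _ (X i))) ^ k := by
      simp only [gpre, coe_eval₂Hom, MvPolynomial.eval₂_monomial]
      exact MvPolynomial.eval₂Hom_monomial _ _ _ _
    rw [this, map_one, one_mul, ← hvalprod, ← tpow_eq_mk]
    simp only [inc2, AlgHom.coe_comp, Function.comp_apply,
      Algebra.TensorProduct.includeRight_apply, Algebra.TensorProduct.includeLeft_apply, twmk_eq]
    rfl
  let θ₀ : ((TwistedT K e1) ⊗[K] MvTruncP K n m) →ₐ[K] TwistedT K e2 :=
    Algebra.TensorProduct.productMap f g
  have hθ₀ : ∀ (b : B) (α β : Fin n → ℕ),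
      θ₀ ((twmk e1 (b ⊗ₜ[K] tpow K n q β)) ⊗ₜ[K] tpow K n m α)
        = twmk e2 ((b ⊗ₜ[K] tpow K n m α) ⊗ₜ[K] tpow K n q β) := by
    intro b α β
    rw [show θ₀ ((twmk e1 (b ⊗ₜ[K] tpow K n q β)) ⊗ₜ[K] tpow K n m α)
        = f (twmk e1 (b ⊗ₜ[K] tpow K n q β)) * g (tpow K n m α) from
      Algebra.TensorProduct.productMap_apply_tmul f g _ _]
    rw [hf]
    have hg' : g (tpow K n m α)
        = twmk e2 (((1 : B) ⊗ₜ[K] tpow K n m α) ⊗ₜ[K] (1 : MvTruncP K n q)) := hg_tpow α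
    rw [hg']
    show (((b ⊗ₜ[K] (1 : MvTruncP K n m)) ⊗ₜ[K] tpow K n q β)
          * (((1 : B) ⊗ₜ[K] tpow K n m α) ⊗ₜ[K] (1 : MvTruncP K n q))
        : (B ⊗[K] MvTruncP K n m) ⊗[K] MvTruncP K n q)
        = (((b ⊗ₜ[K] tpow K n m α) ⊗ₜ[K] tpow K n q β)
          : (B ⊗[K] MvTruncP K n m) ⊗[K] MvTruncP K n q)
    letI iq : @Module K (MvTruncP K n q) _ NonUnitalNonAssocSemiring.toAddCommMonoid :=
      @Algebra.toModule K (MvTruncP K n q) _ inferInstance (inferInstance : Algebra K (MvTruncP K n q))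
    letI im : @Module K (MvTruncP K n m) _ NonUnitalNonAssocSemiring.toAddCommMonoid :=
      @Algebra.toModule K (MvTruncP K n m) _ inferInstance (inferInstance : Algebra K (MvTruncP K n m))
    refine (Algebra.TensorProduct.tmul_mul_tmul _ _ _ _).trans ?_
    refine congrArg₂ (fun u v => u ⊗ₜ[K] v)
      ((Algebra.TensorProduct.tmul_mul_tmul _ _ _ _).trans ?_) (mul_one (tpow K n q β))
    rw [mul_one, one_mul]
    rfl
  -- additive generation of the standard tensor product by monomial tensors
  have hA2gen : ∀ x : (B ⊗[K] MvTruncP K n m) ⊗[K] MvTruncP K n q,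
      x ∈ AddSubmonoid.closure {y : (B ⊗[K] MvTruncP K n m) ⊗[K] MvTruncP K n q |
        ∃ (b : B) (α β : Fin n → ℕ),
          y = (b ⊗ₜ[K] tpow K n m α) ⊗ₜ[K] tpow K n q β} := by
    intro x
    induction x using TensorProduct.induction_on with
    | zero => exact AddSubmonoid.zero_mem _
    | add a b ha hb => exact AddSubmonoid.add_mem _ ha hb
    | tmul w z =>
      have hz : ∀ z ∈ (⊤ : Submodule K (MvTruncP K n q)), ∀ w : B ⊗[K] MvTruncP K n m,
          w ⊗ₜ[K] z ∈ AddSubmonoid.closure {y : (B ⊗[K] MvTruncP K n m) ⊗[K] MvTruncP K n q |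
            ∃ (b : B) (α β : Fin n → ℕ),
              y = (b ⊗ₜ[K] tpow K n m α) ⊗ₜ[K] tpow K n q β} := by
        rw [← span_tpow K n q]
        intro z hzz
        induction hzz using Submodule.span_induction with
        | mem z hmem =>
          obtain ⟨β, rfl⟩ := hmem
          intro w
          induction w using TensorProduct.induction_on with
          | zero =>
            rw [TensorProduct.zero_tmul]
            exact AddSubmonoid.zero_mem _
          | add a b ha hb =>
            rw [TensorProduct.add_tmul]
            exact AddSubmonoid.add_mem _ ha hb
          | tmul b y =>
            have hy : ∀ y ∈ (⊤ : Submodule K (MvTruncP K n m)), ∀ b : B,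
                (b ⊗ₜ[K] y) ⊗ₜ[K] tpow K n q β ∈
                  AddSubmonoid.closure {y : (B ⊗[K] MvTruncP K n m) ⊗[K] MvTruncP K n q |
                    ∃ (b : B) (α β : Fin n → ℕ),
                      y = (b ⊗ₜ[K] tpow K n m α) ⊗ₜ[K] tpow K n q β} := by
              rw [← span_tpow K n m]
              intro y hyy
              induction hyy using Submodule.span_induction with
              | mem y hmem2 =>
                obtain ⟨α, rfl⟩ := hmem2
                intro b
                exact AddSubmonoid.subset_closure ⟨b, α, β, rfl⟩
              | zero =>
                intro b
                rw [TensorProduct.tmul_zero, TensorProduct.zero_tmul]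
                exact AddSubmonoid.zero_mem _
              | add y y' hy hy' ih ih' =>
                intro b
                rw [TensorProduct.tmul_add, TensorProduct.add_tmul]
                exact AddSubmonoid.add_mem _ (ih b) (ih' b)
              | smul c y hy ih =>
                intro b
                rw [← TensorProduct.smul_tmul]
                exact ih (c • b)
            exact hy y Submodule.mem_top b
        | zero =>
          intro w
          rw [TensorProduct.tmul_zero]
          exact AddSubmonoid.zero_mem _
        | add z z' hz hz' ih ih' =>
          intro w
          rw [TensorProduct.tmul_add]
          exact AddSubmonoid.add_mem _ (ih w) (ih' w)
        | smul c z hz ih =>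
          intro w
          rw [← TensorProduct.smul_tmul]
          exact ih (c • w)
      exact hz z Submodule.mem_top w
  -- surjectivity
  have hsurj : Function.Surjective θ₀ := by
    intro x
    have hle : AddSubmonoid.closure {y : (B ⊗[K] MvTruncP K n m) ⊗[K] MvTruncP K n q |
        ∃ (b : B) (α β : Fin n → ℕ),
          y = (b ⊗ₜ[K] tpow K n m α) ⊗ₜ[K] tpow K n q β} ≤
        AddMonoidHom.mrange (θ₀.toLinearMap.toAddMonoidHom) := by
      refine AddSubmonoid.closure_le.2 ?_
      rintro y ⟨b, α, β, rfl⟩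
      exact ⟨(twmk e1 (b ⊗ₜ[K] tpow K n q β)) ⊗ₜ[K] tpow K n m α, hθ₀ b α β⟩
    obtain ⟨w, hw⟩ := hle (hA2gen x)
    exact ⟨w, hw⟩
  -- additive generation of the twisted tensor product by monomial tensors
  have hMgen : ∀ x : (TwistedT K e1) ⊗[K] MvTruncP K n m,
      x ∈ AddSubmonoid.closure {y : (TwistedT K e1) ⊗[K] MvTruncP K n m |
        ∃ (b : B) (α β : Fin n → ℕ),
          y = (twmk e1 (b ⊗ₜ[K] tpow K n q β)) ⊗ₜ[K] tpow K n m α} := by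
    intro x
    induction x using TensorProduct.induction_on with
    | zero => exact AddSubmonoid.zero_mem _
    | add a b ha hb => exact AddSubmonoid.add_mem _ ha hb
    | tmul z y =>
      have hy : ∀ y ∈ (⊤ : Submodule K (MvTruncP K n m)), ∀ z : TwistedT K e1,
          z ⊗ₜ[K] y ∈ AddSubmonoid.closure {y : (TwistedT K e1) ⊗[K] MvTruncP K n m |
            ∃ (b : B) (α β : Fin n → ℕ),
              y = (twmk e1 (b ⊗ₜ[K] tpow K n q β)) ⊗ₜ[K] tpow K n m α} := by
        rw [← span_tpow K n m]
        intro y hyy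
        induction hyy using Submodule.span_induction with
        | mem y hmem =>
          obtain ⟨α, rfl⟩ := hmem
          have hz : ∀ w : B ⊗[K] MvTruncP K n q,
              (twmk e1 w) ⊗ₜ[K] tpow K n m α ∈
                AddSubmonoid.closure {y : (TwistedT K e1) ⊗[K] MvTruncP K n m |
                  ∃ (b : B) (α β : Fin n → ℕ),
                    y = (twmk e1 (b ⊗ₜ[K] tpow K n q β)) ⊗ₜ[K] tpow K n m α} := by
            intro w
            induction w using TensorProduct.induction_on with
            | zero =>
              rw [show twmk e1 (0 : B ⊗[K] MvTruncP K n q) = (0 : TwistedT K e1) from rfl,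
                TensorProduct.zero_tmul]
              exact AddSubmonoid.zero_mem _
            | add a b ha hb =>
              rw [show twmk e1 (a + b) = twmk e1 a + twmk e1 b from rfl,
                TensorProduct.add_tmul]
              exact AddSubmonoid.add_mem _ ha hb
            | tmul b p =>
              have hp : ∀ p ∈ (⊤ : Submodule K (MvTruncP K n q)), ∀ b : B,
                  (twmk e1 (b ⊗ₜ[K] p)) ⊗ₜ[K] tpow K n m α ∈
                    AddSubmonoid.closure {y : (TwistedT K e1) ⊗[K] MvTruncP K n m |
                      ∃ (b : B) (α β : Fin n → ℕ),
                        y = (twmk e1 (b ⊗ₜ[K] tpow K n q β)) ⊗ₜ[K] tpow K n m α} := by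
                rw [← span_tpow K n q]
                intro p hpp
                induction hpp using Submodule.span_induction with
                | mem p hmem2 =>
                  obtain ⟨β, rfl⟩ := hmem2
                  intro b
                  exact AddSubmonoid.subset_closure ⟨b, α, β, rfl⟩
                | zero =>
                  intro b
                  rw [show twmk e1 (b ⊗ₜ[K] (0 : MvTruncP K n q)) = (0 : TwistedT K e1) from
                    congrArg (twmk e1) (TensorProduct.tmul_zero _ b),
                    TensorProduct.zero_tmul]
                  exact AddSubmonoid.zero_mem _
                | add p p' hp hp' ih ih' =>
                  intro b
                  rw [show twmk e1 (b ⊗ₜ[K] (p + p'))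
                      = twmk e1 (b ⊗ₜ[K] p) + twmk e1 (b ⊗ₜ[K] p') from
                    congrArg (twmk e1) (TensorProduct.tmul_add b p p'),
                    TensorProduct.add_tmul]
                  exact AddSubmonoid.add_mem _ (ih b) (ih' b)
                | smul c p hp ih =>
                  intro b
                  rw [show twmk e1 (b ⊗ₜ[K] (c • p)) = twmk e1 ((c • b) ⊗ₜ[K] p) from
                    congrArg (twmk e1) (TensorProduct.smul_tmul c b p).symm]
                  exact ih (c • b)
              exact hp p Submodule.mem_top b
          exact fun z => hz z
        | zero =>
          intro z
          rw [TensorProduct.tmul_zero]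
          exact AddSubmonoid.zero_mem _
        | add y y' hy hy' ih ih' =>
          intro z
          rw [TensorProduct.tmul_add]
          exact AddSubmonoid.add_mem _ (ih z) (ih' z)
        | smul c y hy ih =>
          intro z
          rw [← TensorProduct.smul_tmul]
          exact ih (c • z)
      exact hy y Submodule.mem_top z
  -- the left inverse ψ, built from bases
  let bB := Module.Basis.ofVectorSpace K B
  let bA2 : Module.Basis ((Module.Basis.ofVectorSpaceIndex K B × {d : Fin n →₀ ℕ // (∑ i, d i) ≤ m})
        × {d : Fin n →₀ ℕ // (∑ i, d i) ≤ q}) K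
        ((B ⊗[K] MvTruncP K n m) ⊗[K] MvTruncP K n q) :=
    (bB.tensorProduct (tbasis K n m)).tensorProduct (tbasis K n q)
  let F : ((Module.Basis.ofVectorSpaceIndex K B × {d : Fin n →₀ ℕ // (∑ i, d i) ≤ m})
        × {d : Fin n →₀ ℕ // (∑ i, d i) ≤ q}) → K →+ ((TwistedT K e1) ⊗[K] MvTruncP K n m) :=
    fun idx => AddMonoidHom.mk' (fun c =>
      (twmk e1 ((c • (bB idx.1.1 : B)) ⊗ₜ[K] (tbasis K n q idx.2))) ⊗ₜ[K] (tbasis K n m idx.1.2))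
      (by
        intro a b
        have h : (((a + b) • (bB idx.1.1 : B)) ⊗ₜ[K] (tbasis K n q idx.2)
              : B ⊗[K] MvTruncP K n q)
            = (a • (bB idx.1.1 : B)) ⊗ₜ[K] tbasis K n q idx.2
              + (b • (bB idx.1.1 : B)) ⊗ₜ[K] tbasis K n q idx.2 := by
          rw [add_smul, TensorProduct.add_tmul]
        rw [show twmk e1 (((a + b) • (bB idx.1.1 : B)) ⊗ₜ[K] (tbasis K n q idx.2))
            = twmk e1 ((a • (bB idx.1.1 : B)) ⊗ₜ[K] tbasis K n q idx.2)
              + twmk e1 ((b • (bB idx.1.1 : B)) ⊗ₜ[K] tbasis K n q idx.2) from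
          congrArg (twmk e1) h,
          TensorProduct.add_tmul])
  let ψ : ((B ⊗[K] MvTruncP K n m) ⊗[K] MvTruncP K n q) →+ ((TwistedT K e1) ⊗[K] MvTruncP K n m) :=
    (Finsupp.liftAddHom F).comp (bA2.repr.toLinearMap.toAddMonoidHom)
  have hψ_basis : ∀ (c : K) (i : Module.Basis.ofVectorSpaceIndex K B)
      (dm : {d : Fin n →₀ ℕ // (∑ i, d i) ≤ m}) (dq : {d : Fin n →₀ ℕ // (∑ i, d i) ≤ q}),
      ψ (((c • (bB i : B)) ⊗ₜ[K] tbasis K n m dm) ⊗ₜ[K] tbasis K n q dq)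
        = (twmk e1 ((c • (bB i : B)) ⊗ₜ[K] tbasis K n q dq)) ⊗ₜ[K] tbasis K n m dm := by
    intro c i dm dq
    have hx : ((((c • (bB i : B)) ⊗ₜ[K] tbasis K n m dm) ⊗ₜ[K] tbasis K n q dq)
          : (B ⊗[K] MvTruncP K n m) ⊗[K] MvTruncP K n q)
        = c • (bA2 ((i, dm), dq)) := by
      show _ = c • ((bB.tensorProduct (tbasis K n m)).tensorProduct (tbasis K n q) ((i, dm), dq))
      rw [Module.Basis.tensorProduct_apply, Module.Basis.tensorProduct_apply,
        TensorProduct.smul_tmul', TensorProduct.smul_tmul']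
    have hrep : bA2.repr ((((c • (bB i : B)) ⊗ₜ[K] tbasis K n m dm) ⊗ₜ[K] tbasis K n q dq))
        = Finsupp.single ((i, dm), dq) c := by
      rw [hx, map_smul, Module.Basis.repr_self, Finsupp.smul_single, smul_eq_mul, mul_one]
    show (Finsupp.liftAddHom F) (bA2.repr _) = _
    rw [hrep, Finsupp.liftAddHom_apply_single]
    rfl
  have hψ_mono : ∀ (b : B) (dm : {d : Fin n →₀ ℕ // (∑ i, d i) ≤ m})
      (dq : {d : Fin n →₀ ℕ // (∑ i, d i) ≤ q}),
      ψ ((b ⊗ₜ[K] tbasis K n m dm) ⊗ₜ[K] tbasis K n q dq)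
        = (twmk e1 (b ⊗ₜ[K] tbasis K n q dq)) ⊗ₜ[K] tbasis K n m dm := by
    intro b dm dq
    have hb : ((bB.repr b).sum fun i c => c • (bB i : B)) = b := by
      rw [← Finsupp.linearCombination_apply, Module.Basis.linearCombination_repr]
    have hL : ψ ((b ⊗ₜ[K] tbasis K n m dm) ⊗ₜ[K] tbasis K n q dq)
        = ∑ i ∈ (bB.repr b).support,
            ψ ((((bB.repr b i) • (bB i : B)) ⊗ₜ[K] tbasis K n m dm) ⊗ₜ[K] tbasis K n q dq) := by
      conv_lhs => rw [← hb, Finsupp.sum, TensorProduct.sum_tmul, TensorProduct.sum_tmul]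
      rw [map_sum]
    have hR : ((twmk e1 (b ⊗ₜ[K] tbasis K n q dq)) ⊗ₜ[K] tbasis K n m dm
          : (TwistedT K e1) ⊗[K] MvTruncP K n m)
        = ∑ i ∈ (bB.repr b).support,
            (twmk e1 (((bB.repr b i) • (bB i : B)) ⊗ₜ[K] tbasis K n q dq))
              ⊗ₜ[K] tbasis K n m dm := by
      rw [show twmk e1 (b ⊗ₜ[K] tbasis K n q dq)
          = ∑ i ∈ (bB.repr b).support,
              twmk e1 (((bB.repr b i) • (bB i : B)) ⊗ₜ[K] tbasis K n q dq) from by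
        conv_lhs => rw [← hb, Finsupp.sum]
        exact (congrArg (twmk e1) (TensorProduct.sum_tmul _ _ _)).trans rfl,
        TensorProduct.sum_tmul]
    rw [hL, hR]
    exact Finset.sum_congr rfl fun i _ => hψ_basis (bB.repr b i) i dm dq
  have hbase : ∀ (b : B) (α β : Fin n → ℕ),
      ψ ((b ⊗ₜ[K] tpow K n m α) ⊗ₜ[K] tpow K n q β)
        = (twmk e1 (b ⊗ₜ[K] tpow K n q β)) ⊗ₜ[K] tpow K n m α := by
    intro b α β
    rcases le_or_gt (∑ i, α i) m with hα | hα
    · rcases le_or_gt (∑ i, β i) q with hβ | hβ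
      · rw [tpow_eq_tbasis hα, tpow_eq_tbasis hβ]
        exact hψ_mono b _ _
      · rw [tpow_eq_zero hβ, TensorProduct.tmul_zero, map_zero,
          show twmk e1 (b ⊗ₜ[K] (0 : MvTruncP K n q)) = (0 : TwistedT K e1) from
            congrArg (twmk e1) (TensorProduct.tmul_zero _ b),
          TensorProduct.zero_tmul]
    · rw [tpow_eq_zero hα,
        show ((b ⊗ₜ[K] (0 : MvTruncP K n m)) ⊗ₜ[K] tpow K n q β
            : (B ⊗[K] MvTruncP K n m) ⊗[K] MvTruncP K n q) = 0 from by
          rw [TensorProduct.tmul_zero, TensorProduct.zero_tmul],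
        map_zero, TensorProduct.tmul_zero]
  have hLinv : ∀ x : (TwistedT K e1) ⊗[K] MvTruncP K n m, ψ (θ₀ x) = x := by
    intro x
    induction hMgen x using AddSubmonoid.closure_induction with
    | mem y hy =>
      obtain ⟨b, α, β, rfl⟩ := hy
      rw [hθ₀ b α β]
      exact hbase b α β
    | zero => rw [map_zero]; exact map_zero ψ
    | add a b _ _ ih ih' => rw [map_add]; exact (map_add ψ _ _).trans (by rw [ih, ih'])
  have hinj : Function.Injective θ₀ := Function.LeftInverse.injective hLinv
  refine ⟨AlgEquiv.ofBijective θ₀ ⟨hinj, hsurj⟩, ?_⟩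
  intro b α β _ _
  exact hθ₀ b α β
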